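/- Let w be an infinite word over Σ₂ = {0,1} such that if x is a subword of w with |x| ≥ 5, then x^R is not a subword of w. Then w is ultimately periodic; specifically, w = y' y^ω where y' ∈ {ε, 0, 1, 00, 11} and y belongs to the set B of all cyclic shifts of 001011 and of its complement 110100. -/

import Mathlib

/-- `x` occurs as a contiguous block of consecutive letters of the infinite word `w`. -/
def IsFactor {α : Type*} (x : List α) (w : ℕ → α) : Prop :=
  ∃ i : ℕ, x = (List.range x.length).map fun j => w (i + j)

/-- The periodic infinite word `y^ω = yyy⋯`. -/
def powOmega {α : Type*} (y : List α) (h : y ≠ []) : ℕ → α :=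
  fun n => y[n % y.length]'(Nat.mod_lt n (List.length_pos_iff.mpr h))

/-- The infinite word `y' y^ω`, i.e. the finite word `y'` followed by the infinite word `w`. -/
def prepend {α : Type*} (y' : List α) (w : ℕ → α) : ℕ → α :=
  fun n => if hn : n < y'.length then y'[n] else w (n - y'.length)


def e (a : Fin 2) : Bool := a == 1

lemma e_inj {a b : Fin 2} (h : e a = e b) : a = b := by
  revert h
  have : ∀ a b : Fin 2, e a = e b → a = b := by decide
  exact this a b

lemma e_eq_iff (a b : Fin 2) : e a = e b ↔ a = b := by
  constructor
  · exact e_inj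
  · rintro rfl; rfl

lemma e_false (a : Fin 2) : e a = false ↔ a = 0 := by
  revert a; decide

lemma e_true (a : Fin 2) : e a = true ↔ a = 1 := by
  revert a; decide

lemma key_lemma (w : ℕ → Fin 2)
    (hw : ∀ x : List (Fin 2), IsFactor x w → 5 ≤ x.length → ¬ IsFactor x.reverse w) :
    ∀ i j : ℕ, ∃ t, t < 5 ∧ w (i+t) ≠ w (j+(4-t)) := by
  intro i j
  by_contra hcon
  push_neg at hcon
  set x : List (Fin 2) := [w i, w (i+1), w (i+2), w (i+3), w (i+4)] with hx
  have hfac : IsFactor x w := by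
    refine ⟨i, ?_⟩
    simp [hx, List.range_succ]
  have hfacr : IsFactor x.reverse w := by
    refine ⟨j, ?_⟩
    have h0 := hcon 0 (by norm_num)
    have h1 := hcon 1 (by norm_num)
    have h2 := hcon 2 (by norm_num)
    have h3 := hcon 3 (by norm_num)
    have h4 := hcon 4 (by norm_num)
    norm_num at h0 h1 h2 h3 h4
    simp [hx, List.range_succ, h0, h1, h2, h3, h4]
  exact hw x hfac (by simp [hx]) hfacr

lemma clause' (w : ℕ → Fin 2)
    (key : ∀ i j : ℕ, ∃ t, t < 5 ∧ w (i+t) ≠ w (j+(4-t))) (m i j : ℕ) :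
    e (w (m+(i+0))) ≠ e (w (m+(j+4))) ∨ e (w (m+(i+1))) ≠ e (w (m+(j+3))) ∨
    e (w (m+(i+2))) ≠ e (w (m+(j+2))) ∨ e (w (m+(i+3))) ≠ e (w (m+(j+1))) ∨
    e (w (m+(i+4))) ≠ e (w (m+(j+0))) := by
  obtain ⟨t, ht, hne⟩ := key (m+i) (m+j)
  interval_cases t
  · refine Or.inl ?_
    rw [ne_eq, e_eq_iff, show m+(i+0) = m+i+0 by omega, show m+(j+4) = m+j+(4-0) by omega]
    exact hne
  · refine Or.inr (Or.inl ?_)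
    rw [ne_eq, e_eq_iff, show m+(i+1) = m+i+1 by omega, show m+(j+3) = m+j+(4-1) by omega]
    exact hne
  · refine Or.inr (Or.inr (Or.inl ?_))
    rw [ne_eq, e_eq_iff, show m+(i+2) = m+i+2 by omega, show m+(j+2) = m+j+(4-2) by omega]
    exact hne
  · refine Or.inr (Or.inr (Or.inr (Or.inl ?_)))
    rw [ne_eq, e_eq_iff, show m+(i+3) = m+i+3 by omega, show m+(j+1) = m+j+(4-3) by omega]
    exact hne
  · refine Or.inr (Or.inr (Or.inr (Or.inr ?_)))
    rw [ne_eq, e_eq_iff, show m+(i+4) = m+i+4 by omega, show m+(j+0) = m+j+(4-4) by omega]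
    exact hne

lemma build (w : ℕ → Fin 2) (off : ℕ) (y' y : List (Fin 2)) (hy : y ≠ [])
    (hl : y.length = 6) (hl' : y'.length = off)
    (hy' : ∀ n, (h : n < off) → y'[n]'(by omega) = w n)
    (hyv : ∀ r, (h : r < 6) → y[r]'(by omega) = w (off + r))
    (hper : ∀ i, off ≤ i → w (i+6) = w i) :
    w = prepend y' (powOmega y hy) := by
  have mod6 : ∀ m, w (off + m) = w (off + m % 6) := by
    intro m
    induction m using Nat.strong_induction_on with
    | _ m ih =>
      by_cases h : m < 6
      · rw [Nat.mod_eq_of_lt h]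
      · have h1 : m - 6 < m := by omega
        have h2 := hper (off + (m-6)) (by omega)
        calc w (off+m) = w (off + (m-6) + 6) := by rw [show off+(m-6)+6 = off+m by omega]
          _ = w (off + (m-6)) := h2
          _ = w (off + (m-6) % 6) := ih _ h1
          _ = w (off + m % 6) := by rw [show (m-6) % 6 = m % 6 by omega]
  have hpow : ∀ m, powOmega y hy m = w (off + m % 6) := by
    intro m
    have hm : m % y.length < 6 := by rw [hl]; exact Nat.mod_lt _ (by norm_num)
    have := hyv (m % y.length) hm
    calc powOmega y hy m = w (off + m % y.length) := this
      _ = w (off + m % 6) := by rw [hl]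
  funext n
  by_cases hn : n < y'.length
  · simp only [prepend, dif_pos hn]
    exact (hy' n (by omega)).symm
  · simp only [prepend, dif_neg hn]
    rw [hl'] at hn ⊢
    rw [hpow (n - off), ← mod6 (n - off), show off + (n - off) = n by omega]

set_option maxRecDepth 100000 in
set_option synthInstance.maxSize 10000 in
set_option synthInstance.maxHeartbeats 4000000 in
set_option maxHeartbeats 8000000 in
lemma master (a0 a1 a2 a3 a4 a5 a6 a7 a8 a9 a10 : Bool)
    (h00 : a0 ≠ a4 ∨ a1 ≠ a3 ∨ a2 ≠ a2 ∨ a3 ≠ a1 ∨ a4 ≠ a0)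
    (h01 : a0 ≠ a5 ∨ a1 ≠ a4 ∨ a2 ≠ a3 ∨ a3 ≠ a2 ∨ a4 ≠ a1)
    (h02 : a0 ≠ a6 ∨ a1 ≠ a5 ∨ a2 ≠ a4 ∨ a3 ≠ a3 ∨ a4 ≠ a2)
    (h03 : a0 ≠ a7 ∨ a1 ≠ a6 ∨ a2 ≠ a5 ∨ a3 ≠ a4 ∨ a4 ≠ a3)
    (h04 : a0 ≠ a8 ∨ a1 ≠ a7 ∨ a2 ≠ a6 ∨ a3 ≠ a5 ∨ a4 ≠ a4)
    (h05 : a0 ≠ a9 ∨ a1 ≠ a8 ∨ a2 ≠ a7 ∨ a3 ≠ a6 ∨ a4 ≠ a5)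
    (h06 : a0 ≠ a10 ∨ a1 ≠ a9 ∨ a2 ≠ a8 ∨ a3 ≠ a7 ∨ a4 ≠ a6)
    (h10 : a1 ≠ a4 ∨ a2 ≠ a3 ∨ a3 ≠ a2 ∨ a4 ≠ a1 ∨ a5 ≠ a0)
    (h11 : a1 ≠ a5 ∨ a2 ≠ a4 ∨ a3 ≠ a3 ∨ a4 ≠ a2 ∨ a5 ≠ a1)
    (h12 : a1 ≠ a6 ∨ a2 ≠ a5 ∨ a3 ≠ a4 ∨ a4 ≠ a3 ∨ a5 ≠ a2)
    (h13 : a1 ≠ a7 ∨ a2 ≠ a6 ∨ a3 ≠ a5 ∨ a4 ≠ a4 ∨ a5 ≠ a3)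
    (h14 : a1 ≠ a8 ∨ a2 ≠ a7 ∨ a3 ≠ a6 ∨ a4 ≠ a5 ∨ a5 ≠ a4)
    (h15 : a1 ≠ a9 ∨ a2 ≠ a8 ∨ a3 ≠ a7 ∨ a4 ≠ a6 ∨ a5 ≠ a5)
    (h16 : a1 ≠ a10 ∨ a2 ≠ a9 ∨ a3 ≠ a8 ∨ a4 ≠ a7 ∨ a5 ≠ a6)
    (h20 : a2 ≠ a4 ∨ a3 ≠ a3 ∨ a4 ≠ a2 ∨ a5 ≠ a1 ∨ a6 ≠ a0)
    (h21 : a2 ≠ a5 ∨ a3 ≠ a4 ∨ a4 ≠ a3 ∨ a5 ≠ a2 ∨ a6 ≠ a1)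
    (h22 : a2 ≠ a6 ∨ a3 ≠ a5 ∨ a4 ≠ a4 ∨ a5 ≠ a3 ∨ a6 ≠ a2)
    (h23 : a2 ≠ a7 ∨ a3 ≠ a6 ∨ a4 ≠ a5 ∨ a5 ≠ a4 ∨ a6 ≠ a3)
    (h24 : a2 ≠ a8 ∨ a3 ≠ a7 ∨ a4 ≠ a6 ∨ a5 ≠ a5 ∨ a6 ≠ a4)
    (h25 : a2 ≠ a9 ∨ a3 ≠ a8 ∨ a4 ≠ a7 ∨ a5 ≠ a6 ∨ a6 ≠ a5)
    (h26 : a2 ≠ a10 ∨ a3 ≠ a9 ∨ a4 ≠ a8 ∨ a5 ≠ a7 ∨ a6 ≠ a6)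
    (h30 : a3 ≠ a4 ∨ a4 ≠ a3 ∨ a5 ≠ a2 ∨ a6 ≠ a1 ∨ a7 ≠ a0)
    (h31 : a3 ≠ a5 ∨ a4 ≠ a4 ∨ a5 ≠ a3 ∨ a6 ≠ a2 ∨ a7 ≠ a1)
    (h32 : a3 ≠ a6 ∨ a4 ≠ a5 ∨ a5 ≠ a4 ∨ a6 ≠ a3 ∨ a7 ≠ a2)
    (h33 : a3 ≠ a7 ∨ a4 ≠ a6 ∨ a5 ≠ a5 ∨ a6 ≠ a4 ∨ a7 ≠ a3)
    (h34 : a3 ≠ a8 ∨ a4 ≠ a7 ∨ a5 ≠ a6 ∨ a6 ≠ a5 ∨ a7 ≠ a4)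
    (h35 : a3 ≠ a9 ∨ a4 ≠ a8 ∨ a5 ≠ a7 ∨ a6 ≠ a6 ∨ a7 ≠ a5)
    (h36 : a3 ≠ a10 ∨ a4 ≠ a9 ∨ a5 ≠ a8 ∨ a6 ≠ a7 ∨ a7 ≠ a6)
    (h40 : a4 ≠ a4 ∨ a5 ≠ a3 ∨ a6 ≠ a2 ∨ a7 ≠ a1 ∨ a8 ≠ a0)
    (h41 : a4 ≠ a5 ∨ a5 ≠ a4 ∨ a6 ≠ a3 ∨ a7 ≠ a2 ∨ a8 ≠ a1)
    (h42 : a4 ≠ a6 ∨ a5 ≠ a5 ∨ a6 ≠ a4 ∨ a7 ≠ a3 ∨ a8 ≠ a2)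
    (h43 : a4 ≠ a7 ∨ a5 ≠ a6 ∨ a6 ≠ a5 ∨ a7 ≠ a4 ∨ a8 ≠ a3)
    (h44 : a4 ≠ a8 ∨ a5 ≠ a7 ∨ a6 ≠ a6 ∨ a7 ≠ a5 ∨ a8 ≠ a4)
    (h45 : a4 ≠ a9 ∨ a5 ≠ a8 ∨ a6 ≠ a7 ∨ a7 ≠ a6 ∨ a8 ≠ a5)
    (h46 : a4 ≠ a10 ∨ a5 ≠ a9 ∨ a6 ≠ a8 ∨ a7 ≠ a7 ∨ a8 ≠ a6)
    (h50 : a5 ≠ a4 ∨ a6 ≠ a3 ∨ a7 ≠ a2 ∨ a8 ≠ a1 ∨ a9 ≠ a0)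
    (h51 : a5 ≠ a5 ∨ a6 ≠ a4 ∨ a7 ≠ a3 ∨ a8 ≠ a2 ∨ a9 ≠ a1)
    (h52 : a5 ≠ a6 ∨ a6 ≠ a5 ∨ a7 ≠ a4 ∨ a8 ≠ a3 ∨ a9 ≠ a2)
    (h53 : a5 ≠ a7 ∨ a6 ≠ a6 ∨ a7 ≠ a5 ∨ a8 ≠ a4 ∨ a9 ≠ a3)
    (h54 : a5 ≠ a8 ∨ a6 ≠ a7 ∨ a7 ≠ a6 ∨ a8 ≠ a5 ∨ a9 ≠ a4)
    (h55 : a5 ≠ a9 ∨ a6 ≠ a8 ∨ a7 ≠ a7 ∨ a8 ≠ a6 ∨ a9 ≠ a5)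
    (h56 : a5 ≠ a10 ∨ a6 ≠ a9 ∨ a7 ≠ a8 ∨ a8 ≠ a7 ∨ a9 ≠ a6)
    (h60 : a6 ≠ a4 ∨ a7 ≠ a3 ∨ a8 ≠ a2 ∨ a9 ≠ a1 ∨ a10 ≠ a0)
    (h61 : a6 ≠ a5 ∨ a7 ≠ a4 ∨ a8 ≠ a3 ∨ a9 ≠ a2 ∨ a10 ≠ a1)
    (h62 : a6 ≠ a6 ∨ a7 ≠ a5 ∨ a8 ≠ a4 ∨ a9 ≠ a3 ∨ a10 ≠ a2)
    (h63 : a6 ≠ a7 ∨ a7 ≠ a6 ∨ a8 ≠ a5 ∨ a9 ≠ a4 ∨ a10 ≠ a3)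
    (h64 : a6 ≠ a8 ∨ a7 ≠ a7 ∨ a8 ≠ a6 ∨ a9 ≠ a5 ∨ a10 ≠ a4)
    (h65 : a6 ≠ a9 ∨ a7 ≠ a8 ∨ a8 ≠ a7 ∨ a9 ≠ a6 ∨ a10 ≠ a5)
    (h66 : a6 ≠ a10 ∨ a7 ≠ a9 ∨ a8 ≠ a8 ∨ a9 ≠ a7 ∨ a10 ≠ a6) :
    (a2 = a8) ∧
    ((a1 ≠ a7) → a0 = a1) ∧
    ((a2 = false ∧ a3 = false ∧ a4 = true ∧ a5 = false ∧ a6 = true ∧ a7 = true) ∨ (a2 = false ∧ a3 = true ∧ a4 = false ∧ a5 = true ∧ a6 = true ∧ a7 = false) ∨ (a2 = true ∧ a3 = false ∧ a4 = true ∧ a5 = true ∧ a6 = false ∧ a7 = false) ∨ (a2 = false ∧ a3 = true ∧ a4 = true ∧ a5 = false ∧ a6 = false ∧ a7 = true) ∨ (a2 = true ∧ a3 = true ∧ a4 = false ∧ a5 = false ∧ a6 = true ∧ a7 = false) ∨ (a2 = true ∧ a3 = false ∧ a4 = false ∧ a5 = true ∧ a6 = false ∧ a7 = true) ∨ (a2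 = true ∧ a3 = true ∧ a4 = false ∧ a5 = true ∧ a6 = false ∧ a7 = false) ∨ (a2 = true ∧ a3 = false ∧ a4 = true ∧ a5 = false ∧ a6 = false ∧ a7 = true) ∨ (a2 = false ∧ a3 = true ∧ a4 = false ∧ a5 = false ∧ a6 = true ∧ a7 = true) ∨ (a2 = true ∧ a3 = false ∧ a4 = false ∧ a5 = true ∧ a6 = true ∧ a7 = false) ∨ (a2 = false ∧ a3 = false ∧ a4 = true ∧ a5 = true ∧ a6 = false ∧ a7 = true) ∨ (a2 = false ∧ a3 = true ∧ a4 = true ∧ a5 = false ∧ a6 = true ∧ a7 = false)) ∧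
    (a1 = a7 → ((a1 = false ∧ a2 = false ∧ a3 = true ∧ a4 = false ∧ a5 = true ∧ a6 = true) ∨ (a1 = false ∧ a2 = true ∧ a3 = false ∧ a4 = true ∧ a5 = true ∧ a6 = false) ∨ (a1 = true ∧ a2 = false ∧ a3 = true ∧ a4 = true ∧ a5 = false ∧ a6 = false) ∨ (a1 = false ∧ a2 = true ∧ a3 = true ∧ a4 = false ∧ a5 = false ∧ a6 = true) ∨ (a1 = true ∧ a2 = true ∧ a3 = false ∧ a4 = false ∧ a5 = true ∧ a6 = false) ∨ (a1 = true ∧ a2 = false ∧ a3 = false ∧ a4 = true ∧ a5 = false ∧ a6 = true) ∨ (a1 = true ∧ a2 = true ∧ a3 = false ∧ a4 = true ∧ a5 = false ∧ a6 = false) ∨ (a1 = true ∧ a2 = false ∧ a3 = true ∧ a4 = false ∧ a5 = false ∧ a6 = true) ∨ (a1 = false ∧ a2 = true ∧ a3 = false ∧ a4 = false ∧ a5 = true ∧ a6 = true) ∨ (a1 = true ∧ a2 = false ∧ a3 = false ∧ a4 = true ∧ a5 = true ∧ a6 = false) ∨ (a1 = false ∧ a2 = false ∧ a3 = true ∧ a4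 = true ∧ a5 = false ∧ a6 = true) ∨ (a1 = false ∧ a2 = true ∧ a3 = true ∧ a4 = false ∧ a5 = true ∧ a6 = false))) ∧
    (a0 = a6 → a1 = a7 → ((a0 = false ∧ a1 = false ∧ a2 = true ∧ a3 = false ∧ a4 = true ∧ a5 = true) ∨ (a0 = false ∧ a1 = true ∧ a2 = false ∧ a3 = true ∧ a4 = true ∧ a5 = false) ∨ (a0 = true ∧ a1 = false ∧ a2 = true ∧ a3 = true ∧ a4 = false ∧ a5 = false) ∨ (a0 = false ∧ a1 = true ∧ a2 = true ∧ a3 = false ∧ a4 = false ∧ a5 = true) ∨ (a0 = true ∧ a1 = true ∧ a2 = false ∧ a3 = false ∧ a4 = true ∧ a5 = false) ∨ (a0 = true ∧ a1 = false ∧ a2 = false ∧ a3 = true ∧ a4 = false ∧ a5 = true) ∨ (a0 = true ∧ a1 = true ∧ a2 = false ∧ a3 = true ∧ a4 = false ∧ a5 = false) ∨ (a0 = true ∧ a1 = false ∧ a2 = true ∧ a3 = false ∧ a4 = false ∧ a5 = true) ∨ (a0 = false ∧ a1 = true ∧ a2 = false ∧ a3 = false ∧ a4 = true ∧ a5 =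 true) ∨ (a0 = true ∧ a1 = false ∧ a2 = false ∧ a3 = true ∧ a4 = true ∧ a5 = false) ∨ (a0 = false ∧ a1 = false ∧ a2 = true ∧ a3 = true ∧ a4 = false ∧ a5 = true) ∨ (a0 = false ∧ a1 = true ∧ a2 = true ∧ a3 = false ∧ a4 = true ∧ a5 = false))) := by
  revert h00 h01 h02 h03 h04 h05 h06 h10 h11 h12 h13 h14 h15 h16 h20 h21 h22 h23 h24 h25 h26 h30 h31 h32 h33 h34 h35 h36 h40 h41 h42 h43 h44 h45 h46 h50 h51 h52 h53 h54 h55 h56 h60 h61 h62 h63 h64 h65 h66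
  revert a0 a1 a2 a3 a4 a5 a6 a7 a8 a9 a10
  decide


set_option linter.unnecessarySeqFocus false in
/-- An infinite binary word in which no subword of length ≥ 5 has its reversal also
occurring is ultimately periodic, of the form `y' y^ω` with `y' ∈ {ε,0,1,00,11}` and
`y` a cyclic shift of 001011 or of its complement 110100. -/
theorem stmt_11 (w : ℕ → Fin 2)
    (hw : ∀ x : List (Fin 2), IsFactor x w → 5 ≤ x.length → ¬ IsFactor x.reverse w) :
    ∃ (y' y : List (Fin 2)) (hy : y ≠ []),
      y' ∈ ([[], [0], [1], [0, 0], [1, 1]] : List (List (Fin 2))) ∧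
      (y ~r ([0, 0, 1, 0, 1, 1] : List (Fin 2)) ∨ y ~r ([1, 1, 0, 1, 0, 0] : List (Fin 2))) ∧
      w = prepend y' (powOmega y hy) := by
  have key := key_lemma w hw
  have per : ∀ m : ℕ, w (m+2) = w (m+8) := by
    intro m
    exact e_inj (master (e (w (m+0))) (e (w (m+1))) (e (w (m+2))) (e (w (m+3))) (e (w (m+4))) (e (w (m+5))) (e (w (m+6))) (e (w (m+7))) (e (w (m+8))) (e (w (m+9))) (e (w (m+10))) (clause' w key m 0 0) (clause' w key m 0 1) (clause' w key m 0 2) (clause' w key m 0 3) (clause' w key m 0 4) (clause' w key m 0 5) (clause' w key m 0 6) (clause' w key m 1 0) (clause' w key m 1 1) (clause' w key m 1 2) (clause' w key m 1 3) (clause' w key m 1 4) (clause' w key m 1 5) (clause' w key m 1 6) (clause' w key m 2 0) (clause' w key m 2 1) (clause' w key m 2 2) (clause' w key m 2 3) (clause' w key m 2 4) (clause' w key m 2 5) (clause' w key m 2 6) (clause' w key m 3 0) (clause' w key m 3 1) (clause' w key m 3 2) (clause' w key m 3 3) (clause' w key m 3 4) (clause' w key m 3 5) (clause' w key m 3 6)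 (clause' w key m 4 0) (clause' w key m 4 1) (clause' w key m 4 2) (clause' w key m 4 3) (clause' w key m 4 4) (clause' w key m 4 5) (clause' w key m 4 6) (clause' w key m 5 0) (clause' w key m 5 1) (clause' w key m 5 2) (clause' w key m 5 3) (clause' w key m 5 4) (clause' w key m 5 5) (clause' w key m 5 6) (clause' w key m 6 0) (clause' w key m 6 1) (clause' w key m 6 2) (clause' w key m 6 3) (clause' w key m 6 4) (clause' w key m 6 5) (clause' w key m 6 6)).1
  have hper2 : ∀ i, 2 ≤ i → w (i+6) = w i := by
    intro i hi
    have h := per (i-2)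
    rw [show i-2+2 = i by omega, show i-2+8 = i+6 by omega] at h
    exact h.symm
  have H0 := master (e (w 0)) (e (w 1)) (e (w 2)) (e (w 3)) (e (w 4)) (e (w 5)) (e (w 6)) (e (w 7)) (e (w 8)) (e (w 9)) (e (w 10)) (clause' w key 0 0 0) (clause' w key 0 0 1) (clause' w key 0 0 2) (clause' w key 0 0 3) (clause' w key 0 0 4) (clause' w key 0 0 5) (clause' w key 0 0 6) (clause' w key 0 1 0) (clause' w key 0 1 1) (clause' w key 0 1 2) (clause' w key 0 1 3) (clause' w key 0 1 4) (clause' w key 0 1 5) (clause' w key 0 1 6) (clause' w key 0 2 0) (clause' w key 0 2 1) (clause' w key 0 2 2) (clause' w key 0 2 3) (clause' w key 0 2 4) (clause' w key 0 2 5) (clause' w key 0 2 6) (clause' w key 0 3 0) (clause' w key 0 3 1) (clause' w key 0 3 2) (clause' w key 0 3 3) (clause' w key 0 3 4) (clause' w key 0 3 5) (clause' w key 0 3 6) (clause' w key 0 4 0) (clause' w key 0 4 1) (clause' w key 0 4 2) (clause' w key 0 4 3) (clause' w key 0 4 4) (clause' w key 0 4 5) (clause' w key 0 4 6) (clause' w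 key 0 5 0) (clause' w key 0 5 1) (clause' w key 0 5 2) (clause' w key 0 5 3) (clause' w key 0 5 4) (clause' w key 0 5 5) (clause' w key 0 5 6) (clause' w key 0 6 0) (clause' w key 0 6 1) (clause' w key 0 6 2) (clause' w key 0 6 3) (clause' w key 0 6 4) (clause' w key 0 6 5) (clause' w key 0 6 6)
  simp only [ne_eq, e_eq_iff, e_false, e_true] at H0
  obtain ⟨-, hL2, hS, hSb, hSa⟩ := H0
  have two : ∀ a : Fin 2, a = 0 ∨ a = 1 := by decide
  by_cases h17 : w 1 = w 7
  · by_cases h06 : w 0 = w 6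
    · -- off = 0
      have hperA : ∀ i, 0 ≤ i → w (i+6) = w i := by
        intro i _
        match i with
        | 0 => exact h06.symm
        | 1 => exact h17.symm
        | (n+2) => exact hper2 (n+2) (by omega)
      refine ⟨[], [w 0, w 1, w 2, w 3, w 4, w 5], by simp, by simp, ?_, ?_⟩
      · have h := hSa h06 h17
        obtain h|h|h|h|h|h|h|h|h|h|h|h := h <;> obtain ⟨e0,e1,e2,e3,e4,e5⟩ := h <;>
        rw [e0,e1,e2,e3,e4,e5] <;>
        first
          | exact Or.inl (by decide)
          | exact Or.inr (by decide)
      · exact build w 0 [] [w 0, w 1, w 2, w 3, w 4, w 5] (by simp) (by simp) (by simp)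
          (by intro n h; omega)
          (by intro r h; interval_cases r <;> rfl)
          hperA
    · -- off = 1
      have hperB : ∀ i, 1 ≤ i → w (i+6) = w i := by
        intro i hi
        match i with
        | 0 => exact absurd hi (by omega)
        | 1 => exact h17.symm
        | (n+2) => exact hper2 (n+2) (by omega)
      refine ⟨[w 0], [w 1, w 2, w 3, w 4, w 5, w 6], by simp, ?_, ?_, ?_⟩
      · rcases two (w 0) with h|h <;> rw [h] <;> simp
      · have h := hSb h17
        obtain h|h|h|h|h|h|h|h|h|h|h|h := h <;> obtain ⟨e0,e1,e2,e3,e4,e5⟩ := h <;>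
        rw [e0,e1,e2,e3,e4,e5] <;>
        first
          | exact Or.inl (by decide)
          | exact Or.inr (by decide)
      · exact build w 1 [w 0] [w 1, w 2, w 3, w 4, w 5, w 6] (by simp) (by simp) (by simp)
          (by intro n h; interval_cases n <;> rfl)
          (by intro r h; interval_cases r <;> rfl)
          hperB
  · -- off = 2
    have h01 : w 0 = w 1 := hL2 h17
    refine ⟨[w 0, w 1], [w 2, w 3, w 4, w 5, w 6, w 7], by simp, ?_, ?_, ?_⟩
    · rw [← h01]
      rcases two (w 0) with h|h <;> rw [h] <;> simp
    · have h := hS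
      obtain h|h|h|h|h|h|h|h|h|h|h|h := h <;> obtain ⟨e0,e1,e2,e3,e4,e5⟩ := h <;>
        rw [e0,e1,e2,e3,e4,e5] <;>
        first
          | exact Or.inl (by decide)
          | exact Or.inr (by decide)
    · exact build w 2 [w 0, w 1] [w 2, w 3, w 4, w 5, w 6, w 7] (by simp) (by simp) (by simp)
        (by intro n h; interval_cases n <;> rfl)
        (by intro r h; interval_cases r <;> rfl)
        hper2
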